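/- arXiv:1609.06588 — 4 statements merged into one kernel-verified Lean document; each statement's English description precedes it below -/
import Mathlib

section
/- Let K be a Galois number field of degree k with ring of integers O_K. For a positive integer n and a nonzero integral ideal 𝔮 of O_K, n divides the absolute norm N𝔮 if and only if 𝔮 is divisible by some integral ideal 𝔫 with N𝔫 = n*. In particular, 1_{n | N𝔮} ≤ Σ_{N𝔫 = n*} 1_{𝔫 | 𝔮}. -/
open NumberField

set_option synthInstance.maxHeartbeats 1000000
set_option maxHeartbeats 1000000

noncomputable section

/-- n* = ∏ p^{f_p ⌈α_p/f_p⌉}, where fd gives the residue degrees. -/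
def nStar (fd : ℕ → ℕ) (n : ℕ) : ℕ :=
  ∏ p ∈ n.primeFactors, p ^ (fd p * ((n.factorization p + fd p - 1) / fd p))

lemma ceil_succ' {a f : ℕ} (ha : 1 ≤ a) (hf : 1 ≤ f) :
    (a + f - 1) / f = ((a - f) + f - 1) / f + 1 := by
  rcases le_or_gt a f with h | h
  · have h1 : (a + f - 1) / f = 1 := Nat.div_eq_of_lt_le (by omega) (by omega)
    have h2 : a - f = 0 := by omega
    rw [h1, h2, Nat.div_eq_of_lt (by omega)]
  · have h3 : a + f - 1 = ((a - f) + f - 1) + f := by omega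
    rw [h3, Nat.add_div_right _ (by omega)]

lemma le_mul_ceil' {a f : ℕ} (hf : 1 ≤ f) : a ≤ f * ((a + f - 1) / f) := by
  have h1 := Nat.div_add_mod (a + f - 1) f
  have h2 : (a + f - 1) % f < f := Nat.mod_lt _ hf
  omega

/-- A prime ideal containing a nonzero natural number contains a prime natural number. -/
lemma exists_prime_natCast_mem {R : Type*} [CommRing R] (Q : Ideal R) [hQ : Q.IsPrime]
    (hQtop : Q ≠ ⊤) :
    ∀ m : ℕ, m ≠ 0 → (m : R) ∈ Q → ∃ q : ℕ, q.Prime ∧ (q : R) ∈ Q := by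
  intro m
  induction m using Nat.strong_induction_on with
  | _ m ih =>
    intro hm0 hmem
    rcases eq_or_ne m 1 with rfl | hm1
    · exact absurd (Q.eq_top_iff_one.mpr (by exact_mod_cast hmem)) hQtop
    by_cases hp : m.Prime
    · exact ⟨m, hp, hmem⟩
    · obtain ⟨d, hd, hd2, hdm⟩ := Nat.exists_dvd_of_not_prime2 (by omega) hp
      obtain ⟨c, rfl⟩ := hd
      have hcast : ((d : R) * (c : R)) ∈ Q := by push_cast at hmem ⊢; exact hmem
      rcases hQ.mem_or_mem hcast with h | h
      · exact ih d hdm (by omega) h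
      · have hc0 : c ≠ 0 := by rintro rfl; simp at hm0
        have : c < d * c := by nlinarith [Nat.one_le_iff_ne_zero.mpr hc0]
        exact ih c this hc0 h

variable (K : Type) [Field K] [NumberField K]

/-- If a prime `p` divides the norm of a nonzero ideal `𝔮`, then there is a maximal ideal
over `p` dividing `𝔮`. -/
lemma exists_prime_over
    (fd : ℕ → ℕ)
    (hfd : ∀ p : ℕ, p.Prime → ∀ P : Ideal (𝓞 K), P.IsMaximal → (p : 𝓞 K) ∈ P →
      Ideal.absNorm P = p ^ fd p)
    (p : ℕ) (hp : p.Prime) (𝔮 : Ideal (𝓞 K)) (h𝔮 : 𝔮 ≠ 0)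
    (hdvd : p ∣ Ideal.absNorm 𝔮) :
    ∃ P : Ideal (𝓞 K), P.IsMaximal ∧ (p : 𝓞 K) ∈ P ∧ P ∣ 𝔮 ∧
      Ideal.absNorm P = p ^ fd p := by
  revert h𝔮 hdvd
  refine UniqueFactorizationMonoid.induction_on_prime 𝔮 ?_ ?_ ?_
  · intro h; exact absurd rfl h
  · intro x hx _ hdvd
    rw [Ideal.isUnit_iff.mp hx, Ideal.absNorm_top] at hdvd
    exact absurd (Nat.dvd_one.mp hdvd) hp.one_lt.ne'
  · intro a Q ha hQ ih _ hdvd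
    rw [_root_.map_mul Ideal.absNorm Q a] at hdvd
    have hQprime : Q.IsPrime := Ideal.isPrime_of_prime hQ
    rcases hp.dvd_mul.mp hdvd with hdQ | hda
    · have hQbot : Q ≠ ⊥ := hQ.ne_zero
      have hQmax : Q.IsMaximal := hQprime.isMaximal hQbot
      have hN0 : Ideal.absNorm Q ≠ 0 := by
        rw [Ne, Ideal.absNorm_eq_zero_iff]; exact hQbot
      obtain ⟨q, hq, hqmem⟩ := exists_prime_natCast_mem Q hQprime.ne_top
        (Ideal.absNorm Q) hN0 (Ideal.absNorm_mem Q)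
      have hNQ := hfd q hq Q hQmax hqmem
      have hpq : p = q := by
        rw [hNQ] at hdQ
        exact (Nat.prime_dvd_prime_iff_eq hp hq).mp (hp.dvd_of_dvd_pow hdQ)
      subst hpq
      exact ⟨Q, hQmax, hqmem, Dvd.intro a rfl, hNQ⟩
    · obtain ⟨P, h1, h2, h3, h4⟩ := ih ha hda
      exact ⟨P, h1, h2, h3.trans (Dvd.intro Q (mul_comm a Q ▸ rfl)), h4⟩

/-- Ideals with coprime norms are coprime. -/
lemma isCoprime_of_norm_coprime (I J : Ideal (𝓞 K))
    (h : Nat.Coprime (Ideal.absNorm I) (Ideal.absNorm J)) : IsCoprime I J := by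
  rw [Ideal.isCoprime_iff_sup_eq, Ideal.eq_top_iff_one]
  obtain ⟨u, v, huv⟩ : IsCoprime ((Ideal.absNorm I : ℤ)) ((Ideal.absNorm J : ℤ)) :=
    Nat.isCoprime_iff_coprime.mpr h
  have key : (algebraMap ℤ (𝓞 K)) (u * (Ideal.absNorm I : ℤ) + v * (Ideal.absNorm J : ℤ)) = 1 := by
    rw [huv, map_one]
  rw [map_add, map_mul, map_mul, map_natCast, map_natCast] at key
  rw [← key]
  exact Submodule.add_mem _
    (Ideal.mul_mem_left _ _ (Ideal.mem_sup_left (Ideal.absNorm_mem I)))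
    (Ideal.mul_mem_left _ _ (Ideal.mem_sup_right (Ideal.absNorm_mem J)))

/-- If `p^a` divides the norm of a nonzero ideal `𝔮`, then `𝔮` has a divisor whose norm is
`p ^ (f·⌈a/f⌉)` where `f` is the residue degree of `p`. -/
lemma exists_ideal_norm_pow
    (fd : ℕ → ℕ)
    (hfd : ∀ p : ℕ, p.Prime → ∀ P : Ideal (𝓞 K), P.IsMaximal → (p : 𝓞 K) ∈ P →
      Ideal.absNorm P = p ^ fd p)
    (p : ℕ) (hp : p.Prime) (hf : 1 ≤ fd p) :
    ∀ t : ℕ, ∀ 𝔮 : Ideal (𝓞 K), 𝔮 ≠ 0 → ∀ a : ℕ, p ^ a ∣ Ideal.absNorm 𝔮 →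
      (a + fd p - 1) / fd p = t →
      ∃ 𝔫 : Ideal (𝓞 K), 𝔫 ∣ 𝔮 ∧ Ideal.absNorm 𝔫 = p ^ (fd p * t) := by
  intro t
  induction t with
  | zero =>
    intro 𝔮 _ a _ _
    exact ⟨⊤, Ideal.dvd_iff_le.mpr le_top, by simp [Ideal.absNorm_top]⟩
  | succ t ih =>
    intro 𝔮 h𝔮 a hdvd hceil
    have ha : 1 ≤ a := by
      by_contra h
      have : a = 0 := by omega
      subst this
      rw [Nat.div_eq_of_lt (by omega)] at hceil
      omega
    obtain ⟨P, hPmax, hPmem, hPdvd, hPnorm⟩ :=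
      exists_prime_over K fd hfd p hp 𝔮 h𝔮
        (dvd_trans (dvd_pow_self p (by omega : a ≠ 0)) hdvd)
    obtain ⟨𝔮', rfl⟩ := hPdvd
    have h𝔮' : 𝔮' ≠ 0 := by
      rintro rfl; rw [mul_zero] at h𝔮; exact h𝔮 rfl
    have hN : Ideal.absNorm (P * 𝔮') = p ^ fd p * Ideal.absNorm 𝔮' := by
      rw [_root_.map_mul Ideal.absNorm P 𝔮', hPnorm]
    have hdvd' : p ^ (a - fd p) ∣ Ideal.absNorm 𝔮' := by
      rcases le_or_gt a (fd p) with h | h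
      · have : a - fd p = 0 := by omega
        rw [this, pow_zero]; exact one_dvd _
      · have key : p ^ fd p * p ^ (a - fd p) ∣ p ^ fd p * Ideal.absNorm 𝔮' := by
          rw [← pow_add, show fd p + (a - fd p) = a by omega, ← hN]; exact hdvd
        exact (Nat.mul_dvd_mul_iff_left (pow_pos hp.pos (fd p))).mp key
    have hceil' : ((a - fd p) + fd p - 1) / fd p = t := by
      have := ceil_succ' ha hf
      omega
    obtain ⟨𝔫', h𝔫'dvd, h𝔫'norm⟩ := ih 𝔮' h𝔮' (a - fd p) hdvd' hceil'
    refine ⟨P * 𝔫', mul_dvd_mul_left P h𝔫'dvd, ?_⟩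
    rw [_root_.map_mul Ideal.absNorm P 𝔫', hPnorm, h𝔫'norm, ← pow_add]
    congr 1
    ring

/-- n ∣ N𝔮 iff 𝔮 is divisible by an ideal of norm n*;
in particular 1_{n ∣ N𝔮} ≤ Σ_{N𝔫 = n*} 1_{𝔫 ∣ 𝔮}. -/
theorem divides_norm_iff_ideal_of_norm_nStar_divides
    (K : Type) [Field K] [NumberField K] [IsGalois ℚ K] (k : ℕ)
    (hdeg : Module.finrank ℚ K = k)
    (fd : ℕ → ℕ)
    -- fd p is the residue degree of the primes above p:
    (hfd : ∀ p : ℕ, p.Prime → ∀ P : Ideal (𝓞 K), P.IsMaximal → (p : 𝓞 K) ∈ P →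
      Ideal.absNorm P = p ^ fd p)
    (n : ℕ) (hn : 0 < n) (𝔮 : Ideal (𝓞 K)) (h𝔮 : 𝔮 ≠ 0) :
    (n ∣ Ideal.absNorm 𝔮 ↔ ∃ 𝔫 : Ideal (𝓞 K), Ideal.absNorm 𝔫 = nStar fd n ∧ 𝔫 ∣ 𝔮) ∧
    (if n ∣ Ideal.absNorm 𝔮 then 1 else 0)
      ≤ Nat.card {𝔫 : Ideal (𝓞 K) // Ideal.absNorm 𝔫 = nStar fd n ∧ 𝔫 ∣ 𝔮} := by
  -- the residue degrees of primes are positive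
  have hfpos : ∀ p : ℕ, p.Prime → 1 ≤ fd p := by
    intro p hp
    have hnorm : Ideal.absNorm (Ideal.span {((p : ℕ) : 𝓞 K)}) =
        p ^ Module.finrank ℚ K := by
      rw [Ideal.absNorm_span_singleton]
      have h1 : ((p : ℕ) : 𝓞 K) = algebraMap ℤ (𝓞 K) ((p : ℕ) : ℤ) := by push_cast; ring
      have h2 := Algebra.norm_algebraMap_of_basis (Module.Free.chooseBasis ℤ (𝓞 K)) ((p : ℕ) : ℤ)
      rw [h1, h2, ← Module.finrank_eq_card_chooseBasisIndex,
        NumberField.RingOfIntegers.rank]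
      rw [Int.natAbs_pow]
      simp
    have hne_top : Ideal.span {((p : ℕ) : 𝓞 K)} ≠ ⊤ := by
      intro h
      rw [h, Ideal.absNorm_top] at hnorm
      have hk1 : 0 < Module.finrank ℚ K := Module.finrank_pos
      have := Nat.one_lt_pow hk1.ne' hp.one_lt
      omega
    obtain ⟨P, hPmax, hle⟩ := Ideal.exists_le_maximal _ hne_top
    have hmem : ((p : ℕ) : 𝓞 K) ∈ P := hle (Ideal.mem_span_singleton_self _)
    have hNP := hfd p hp P hPmax hmem
    by_contra h
    have : fd p = 0 := by omega
    rw [this, pow_zero, Ideal.absNorm_eq_one_iff] at hNP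
    exact hPmax.ne_top hNP
  have hiff : n ∣ Ideal.absNorm 𝔮 ↔
      ∃ 𝔫 : Ideal (𝓞 K), Ideal.absNorm 𝔫 = nStar fd n ∧ 𝔫 ∣ 𝔮 := by
    constructor
    · intro hdvd
      have hstep : ∀ p ∈ n.primeFactors, ∃ 𝔫 : Ideal (𝓞 K), 𝔫 ∣ 𝔮 ∧
          Ideal.absNorm 𝔫 = p ^ (fd p * ((n.factorization p + fd p - 1) / fd p)) := by
        intro p hp'
        have hp := Nat.prime_of_mem_primeFactors hp'
        exact exists_ideal_norm_pow K fd hfd p hp (hfpos p hp) _ 𝔮 h𝔮 (n.factorization p)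
          (dvd_trans (Nat.ordProj_dvd n p) hdvd) rfl
      choose g hg1 hg2 using hstep
      refine ⟨∏ p ∈ n.primeFactors.attach, g p.1 p.2, ?_, ?_⟩
      · calc Ideal.absNorm (∏ p ∈ n.primeFactors.attach, g p.1 p.2)
            = ∏ p ∈ n.primeFactors.attach, Ideal.absNorm (g p.1 p.2) :=
              map_prod Ideal.absNorm _ _
          _ = ∏ p ∈ n.primeFactors.attach,
                p.1 ^ (fd p.1 * ((n.factorization p.1 + fd p.1 - 1) / fd p.1)) :=
              Finset.prod_congr rfl (fun p _ => hg2 p.1 p.2)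
          _ = nStar fd n := by rw [nStar]; exact Finset.prod_attach n.primeFactors (fun p => p ^ (fd p * ((n.factorization p + fd p - 1) / fd p)))
      · refine Finset.prod_dvd_of_coprime ?_ (fun p _ => hg1 p.1 p.2)
        intro p _ q _ hne
        apply isCoprime_of_norm_coprime
        rw [hg2 p.1 p.2, hg2 q.1 q.2]
        have hp := Nat.prime_of_mem_primeFactors p.2
        have hq := Nat.prime_of_mem_primeFactors q.2
        have hpq : p.1 ≠ q.1 := fun h => hne (Subtype.ext h)
        exact Nat.Coprime.pow _ _ ((Nat.coprime_primes hp hq).mpr hpq)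
    · rintro ⟨𝔫, h𝔫norm, h𝔫dvd⟩
      have h1 : nStar fd n ∣ Ideal.absNorm 𝔮 := h𝔫norm ▸ map_dvd Ideal.absNorm h𝔫dvd
      have h2 : n ∣ nStar fd n := by
        conv_lhs => rw [← Nat.factorization_prod_pow_eq_self hn.ne']
        rw [nStar, Finsupp.prod, Nat.support_factorization]
        exact Finset.prod_dvd_prod_of_dvd _ _ (fun p hp =>
          pow_dvd_pow _ (le_mul_ceil' (hfpos p (Nat.prime_of_mem_primeFactors hp))))
      exact h2.trans h1
  refine ⟨hiff, ?_⟩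
  by_cases hcase : n ∣ Ideal.absNorm 𝔮
  · rw [if_pos hcase]
    obtain ⟨𝔫, h1, h2⟩ := hiff.mp hcase
    have hfin : Finite {𝔫 : Ideal (𝓞 K) // Ideal.absNorm 𝔫 = nStar fd n ∧ 𝔫 ∣ 𝔮} :=
      Set.Finite.to_subtype
        ((Ideal.finite_setOf_absNorm_eq (S := 𝓞 K) (nStar fd n)).subset
          (fun I hI => hI.1))
    have hne : Nonempty {𝔫 : Ideal (𝓞 K) // Ideal.absNorm 𝔫 = nStar fd n ∧ 𝔫 ∣ 𝔮} :=
      ⟨⟨𝔫, h1, h2⟩⟩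
    exact Nat.card_pos
  · rw [if_neg hcase]
    exact Nat.zero_le _

end
end

section
/- Let K be a Galois number field of degree k with ring of integers O_K. For each positive integer n there exists a function μ_n on integral ideals of O_K such that (i) for every nonzero integral ideal 𝔮, 1_{n | N𝔮} = Σ_𝔫 μ_n(𝔫)·1_{𝔫 | 𝔮}; (ii) μ_n is supported on ideals 𝔫 with n* | N𝔫 and N𝔫 | n^k; and (iii) |μ_n(𝔮)| ≤ 2^{k·ω(n)} for every ideal 𝔮, where ω(n) is the number of distinct prime divisors of n. -/
/-!
Put `𝔐 = ∏_{p ∣ n} ∏_{𝔭 ∣ p} 𝔭 ^ ⌈α_p / f_p⌉`, where `p ^ α_p ∥ n`. Since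
`v_p (N 𝔮) = f_p * ∑_{𝔭 ∣ p} v_𝔭 𝔮`, the condition `n ∣ N 𝔮` holds iff
`∑_{𝔭 ∣ p} v_𝔭 𝔮 ≥ ⌈α_p / f_p⌉` for every `p ∣ n`, and this only depends on `gcd(𝔮, 𝔐)`.
So `𝔮 ↦ 1_{n ∣ N 𝔮}` is the sum over the divisors `𝔫` of `gcd(𝔮, 𝔐)` of the Möbius inverse
`μ_n` of `𝔡 ↦ 1_{n ∣ N 𝔡}` in the divisor lattice of `𝔐`. The Möbius function of that lattice
is `±1` on squarefree quotients and `0` otherwise, giving `|μ_n 𝔫| ≤ 2 ^ ω(𝔐) ≤ 2 ^ (k ω(n))`.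
If `μ_n 𝔫 ≠ 0` then `n` divides the norm of a divisor of `𝔫`, which forces `n* ∣ N 𝔫`; and
`N 𝔫 ∣ N 𝔐 ∣ n ^ k` since there are at most `k / f_p` primes above `p`.
-/

open NumberField Classical

noncomputable section

open Finset Ideal UniqueFactorizationMonoid

theorem factorization_nStar (f : ℕ → ℕ) (n ℓ : ℕ) :
    (nStar f n).factorization ℓ = f ℓ * (n.factorization ℓ ⌈/⌉ f ℓ) := by
  have hprime {p} (hp : p ∈ n.primeFactors) := Nat.prime_of_mem_primeFactors hp
  rw [nStar, Nat.factorization_prod fun _ hp => pow_ne_zero _ (hprime hp).ne_zero,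
    Finsupp.finsetSum_apply,
    sum_congr rfl fun _ hp => by rw [(hprime hp).factorization_pow, Finsupp.single_apply],
    sum_ite_eq']
  split_ifs with h
  · -- `nStar` spells `α ⌈/⌉ f` as `(α + f - 1) / f`
    rfl
  · rw [Finsupp.notMem_support_iff.1 (by rwa [Nat.support_factorization]), zero_ceilDiv, mul_zero]

theorem nStar_ne_zero (f : ℕ → ℕ) (n : ℕ) : nStar f n ≠ 0 :=
  prod_ne_zero_iff.2 fun _ hp => pow_ne_zero _ (Nat.prime_of_mem_primeFactors hp).ne_zero

theorem Finset.le_sum_min_iff {ι M : Type*} [AddCommMonoid M] [LinearOrder M]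
    [IsOrderedAddMonoid M] [CanonicallyOrderedAdd M] {s : Finset ι} {x : ι → M} {m : M} :
    m ≤ ∑ i ∈ s, min m (x i) ↔ m ≤ ∑ i ∈ s, x i := by
  refine ⟨fun h => h.trans (sum_le_sum fun i _ => min_le_right _ _), fun h => ?_⟩
  by_cases hex : ∃ i ∈ s, m ≤ x i
  · obtain ⟨i, hi, hmi⟩ := hex
    calc m = min m (x i) := (min_eq_left hmi).symm
      _ ≤ ∑ j ∈ s, min m (x j) :=
        single_le_sum (f := fun j => min m (x j)) (fun _ _ => zero_le) hi
  · push Not at hex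
    rwa [sum_congr rfl fun i hi => min_eq_right (hex i hi).le]

section MultisetMoebius

variable {α : Type*}

theorem Finset.val_le_iff_subset_toFinset {T : Finset α} {t : Multiset α} :
    T.val ≤ t ↔ T ⊆ t.toFinset := by
  rw [Multiset.le_iff_subset T.nodup, ← Multiset.toFinset_subset, Finset.val_toFinset]

-- Möbius inversion in the lattice of multisets: `μ(u, t) = (-1) ^ card (t - u)` if `t - u` has
-- no repeated elements and `0` otherwise.
def multisetMoebius (F : Multiset α → ℤ) (t : Multiset α) : ℤ :=
  ∑ T ∈ t.toFinset.powerset, (-1) ^ #T * F (t - T.val)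

theorem sum_multisetMoebius (F : Multiset α → ℤ) (s : Multiset α) :
    ∑ t ∈ s.powerset.toFinset, multisetMoebius F t = F s := by
  -- substituting `t = u + T` turns the double sum into `∑_{u ≤ s} F u ∑_{T ⊆ supp (s - u)} (-1)^#T`
  calc ∑ t ∈ s.powerset.toFinset, multisetMoebius F t
      = ∑ x ∈ s.powerset.toFinset.sigma fun u => (s - u).toFinset.powerset,
          (-1) ^ #x.2 * F x.1 := by
        simp only [multisetMoebius]
        rw [sum_sigma']
        refine sum_nbij' (fun x => ⟨x.1 - x.2.val, x.2⟩) (fun x => ⟨x.1 + x.2.val, x.2⟩)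
          ?_ ?_ ?_ ?_ fun _ _ => rfl
        all_goals
          rintro ⟨t, T⟩ h
          simp only [mem_sigma, Multiset.mem_toFinset, Multiset.mem_powerset, mem_powerset,
            ← Finset.val_le_iff_subset_toFinset] at h ⊢
        · exact ⟨tsub_le_self.trans h.1, by rw [tsub_tsub_assoc h.1 h.2]; exact le_add_self⟩
        · exact ⟨(le_tsub_iff_left h.1).1 h.2, le_add_self⟩
        · rw [tsub_add_cancel_of_le h.2]
        · rw [add_tsub_cancel_right]
    _ = ∑ u ∈ s.powerset.toFinset, if u = s then F s else 0 := by
        rw [sum_sigma]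
        refine sum_congr rfl fun u hu => ?_
        rw [Multiset.mem_toFinset, Multiset.mem_powerset] at hu
        dsimp only
        rw [← sum_mul, sum_powerset_neg_one_pow_card]
        simp only [Multiset.toFinset_eq_empty, tsub_eq_zero_iff_le, hu.ge_iff_eq]
        split_ifs with h <;> simp [h]
    _ = F s := by simp

theorem exists_le_of_multisetMoebius_ne_zero {F : Multiset α → ℤ} {t : Multiset α}
    (h : multisetMoebius F t ≠ 0) : ∃ u ≤ t, F u ≠ 0 := by
  by_contra! hF
  exact h (sum_eq_zero fun T _ => by rw [hF _ tsub_le_self, mul_zero])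

theorem abs_multisetMoebius_le {F : Multiset α → ℤ} (hF : ∀ u, |F u| ≤ 1) (t : Multiset α) :
    |multisetMoebius F t| ≤ 2 ^ #t.toFinset :=
  calc |multisetMoebius F t|
      ≤ ∑ T ∈ t.toFinset.powerset, |(-1) ^ #T * F (t - T.val)| := abs_sum_le_sum_abs _ _
    _ ≤ ∑ T ∈ t.toFinset.powerset, 1 := sum_le_sum fun T _ => by simpa [abs_mul] using hF _
    _ = 2 ^ #t.toFinset := by simp

end MultisetMoebius

section DivisorMoebius

variable {R : Type*} [CommRing R] [IsDedekindDomain R]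
  {F : Multiset (Ideal R) → ℤ} {M : Multiset (Ideal R)}

/-- Möbius inversion of `F` on the divisors of `M.prod`, an ideal being encoded by its
multiset of prime factors. -/
def divisorMoebius (F : Multiset (Ideal R) → ℤ) (M : Multiset (Ideal R)) (𝔫 : Ideal R) : ℤ :=
  if 𝔫 ≠ ⊥ ∧ normalizedFactors 𝔫 ≤ M then multisetMoebius F (normalizedFactors 𝔫) else 0

theorem divisorMoebius_multiset_prod (hM : ∀ P ∈ M, Prime P) {t : Multiset (Ideal R)}
    (ht : t ≤ M) :
    divisorMoebius F M t.prod = multisetMoebius F t := by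
  have htP : ∀ P ∈ t, Prime P := fun P hP => hM P (Multiset.mem_of_le ht hP)
  rw [divisorMoebius, normalizedFactors_prod_of_prime htP,
    if_pos ⟨Multiset.prod_ne_zero_of_prime t htP, ht⟩]

theorem exists_prod_eq_of_divisorMoebius_ne_zero {𝔫 : Ideal R} (h : divisorMoebius F M 𝔫 ≠ 0) :
    ∃ t ≤ M, t.prod = 𝔫 ∧ multisetMoebius F t ≠ 0 := by
  unfold divisorMoebius at h
  split_ifs at h with h𝔫
  · exact ⟨_, h𝔫.2, Ideal.prod_normalizedFactors_eq_self h𝔫.1, h⟩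
  · exact absurd rfl h

theorem sum_divisorMoebius_filter_dvd (hM : ∀ P ∈ M, Prime P) {𝔮 : Ideal R} (h𝔮 : 𝔮 ≠ ⊥) :
    ∑ 𝔫 ∈ M.powerset.toFinset.image Multiset.prod with 𝔫 ∣ 𝔮, divisorMoebius F M 𝔫 =
      F (M ∩ normalizedFactors 𝔮) := by
  have hprime {t} (ht : t ≤ M) : ∀ P ∈ t, Prime P := fun P hP => hM P (Multiset.mem_of_le ht hP)
  have hdvd {t} (ht : t ≤ M) : t.prod ∣ 𝔮 ↔ t ≤ normalizedFactors 𝔮 := by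
    rw [dvd_iff_normalizedFactors_le_normalizedFactors (Multiset.prod_ne_zero_of_prime t
      (hprime ht)) h𝔮, normalizedFactors_prod_of_prime (hprime ht)]
  have hdivisors : {t ∈ M.powerset.toFinset | t.prod ∣ 𝔮} =
      (M ∩ normalizedFactors 𝔮).powerset.toFinset := by
    ext t
    simp only [mem_filter, Multiset.mem_toFinset, Multiset.mem_powerset, Multiset.le_inter_iff]
    exact and_congr_right hdvd
  have hle {t} (ht : t ∈ (M ∩ normalizedFactors 𝔮).powerset.toFinset) : t ≤ M :=
    (Multiset.mem_powerset.1 (Multiset.mem_toFinset.1 ht)).trans Multiset.inter_le_left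
  rw [filter_image, hdivisors, sum_image, ← sum_multisetMoebius F (M ∩ normalizedFactors 𝔮)]
  · exact sum_congr rfl fun t ht => divisorMoebius_multiset_prod hM (hle ht)
  · intro t ht u hu htu
    rw [← normalizedFactors_prod_of_prime (hprime (hle ht)),
      ← normalizedFactors_prod_of_prime (hprime (hle hu)), htu]

theorem tsum_divisorMoebius_mul_ite_dvd (hM : ∀ P ∈ M, Prime P) {𝔮 : Ideal R} (h𝔮 : 𝔮 ≠ ⊥) :
    ∑' 𝔫, (divisorMoebius F M 𝔫 : ℝ) * (if 𝔫 ∣ 𝔮 then 1 else 0) = F (M ∩ normalizedFactors 𝔮) := by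
  rw [tsum_eq_sum (s := M.powerset.toFinset.image Multiset.prod),
    ← sum_divisorMoebius_filter_dvd (F := F) hM h𝔮]
  · simp [sum_filter]
  · intro 𝔫 h𝔫
    rw [Int.cast_eq_zero.2 ?_, zero_mul]
    by_contra h
    obtain ⟨t, htM, rfl, -⟩ := exists_prod_eq_of_divisorMoebius_ne_zero h
    exact h𝔫 (mem_image_of_mem _ (Multiset.mem_toFinset.2 (Multiset.mem_powerset.2 htM)))

theorem abs_divisorMoebius_le (hF : ∀ u, |F u| ≤ 1) (𝔫 : Ideal R) :
    |divisorMoebius F M 𝔫| ≤ 2 ^ #M.toFinset := by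
  unfold divisorMoebius
  split_ifs with h
  · exact (abs_multisetMoebius_le hF _).trans <| pow_le_pow_right₀ one_le_two <|
      card_le_card <| Multiset.toFinset_subset.2 <| Multiset.subset_of_le h.2
  · simp

end DivisorMoebius

section ResidueDegrees

variable {S : Type*} [CommRing S] [IsDedekindDomain S] {f : ℕ → ℕ} {p ℓ n : ℕ} {P : Ideal S}

variable (S) in
def primesAbove (p : ℕ) : Finset (Ideal S) :=
  (normalizedFactors (span {(p : S)})).toFinset

theorem prime_of_mem_primesAbove (hP : P ∈ primesAbove S p) : Prime P :=
  prime_of_normalized_factor P (Multiset.mem_toFinset.1 hP)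

variable (S) in
/-- The prime factorization of `𝔐 = ∏_{p ∣ n} ∏_{𝔭 ∣ p} 𝔭 ^ ⌈α_p / f_p⌉`, where `p ^ α_p ∥ n`. -/
def cappedPrimes (f : ℕ → ℕ) (n : ℕ) : Multiset (Ideal S) :=
  ∑ p ∈ n.primeFactors, (n.factorization p ⌈/⌉ f p) • (primesAbove S p).val

theorem exists_of_mem_cappedPrimes (hP : P ∈ cappedPrimes S f n) :
    ∃ p ∈ n.primeFactors, P ∈ primesAbove S p := by
  obtain ⟨p, hp, hPp⟩ := Multiset.mem_sum.1 hP
  exact ⟨p, hp, (Multiset.mem_nsmul.1 hPp).2⟩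

theorem prime_of_mem_cappedPrimes (hP : P ∈ cappedPrimes S f n) : Prime P :=
  have ⟨_, _, hPp⟩ := exists_of_mem_cappedPrimes hP
  prime_of_mem_primesAbove hPp

variable [Module.Free ℤ S] [Module.Finite ℤ S]

variable (S) in
def HasResidueDegrees (f : ℕ → ℕ) : Prop :=
  ∀ p : ℕ, p.Prime → ∀ P : Ideal S, P.IsMaximal → (p : S) ∈ P → absNorm P = p ^ f p

theorem span_natCast_ne_bot (hp : p ≠ 0) : span {(p : S)} ≠ ⊥ := by
  rw [Ne, ← absNorm_eq_zero_iff, absNorm_span_natCast]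
  exact pow_ne_zero _ hp

theorem absNorm_multiset_prod_ne_zero {t : Multiset (Ideal S)} (ht : ∀ P ∈ t, Prime P) :
    absNorm t.prod ≠ 0 :=
  absNorm_eq_zero_iff.not.2 (Multiset.prod_ne_zero_of_prime t ht)

theorem mem_primesAbove (hp : p ≠ 0) : P ∈ primesAbove S p ↔ P.IsPrime ∧ (p : S) ∈ P := by
  rw [primesAbove, Multiset.mem_toFinset, Ideal.mem_normalizedFactors_iff (span_natCast_ne_bot hp),
    span_singleton_le_iff_mem]

theorem eq_of_mem_primesAbove (hp : p.Prime) (hℓ : ℓ.Prime) (hPp : P ∈ primesAbove S p)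
    (hPℓ : P ∈ primesAbove S ℓ) : p = ℓ := by
  by_contra hne
  obtain ⟨u, v, huv⟩ := Nat.isCoprime_iff_coprime.2 ((Nat.coprime_primes hp hℓ).2 hne)
  have hone : ((u * p + v * ℓ : ℤ) : S) ∈ P := by
    push_cast
    exact P.add_mem (P.mul_mem_left _ ((mem_primesAbove hp.ne_zero).1 hPp).2)
      (P.mul_mem_left _ ((mem_primesAbove hℓ.ne_zero).1 hPℓ).2)
  rw [huv, Int.cast_one, ← eq_top_iff_one] at hone
  exact ((mem_primesAbove hp.ne_zero).1 hPp).1.ne_top hone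

theorem absNorm_of_mem_primesAbove (hf : HasResidueDegrees S f) (hp : p.Prime)
    (hP : P ∈ primesAbove S p) : absNorm P = p ^ f p :=
  have hP' := prime_of_mem_primesAbove hP
  hf p hp P ((isPrime_of_prime hP').isMaximal hP'.ne_zero) ((mem_primesAbove hp.ne_zero).1 hP).2

theorem residueDegree_pos (hf : HasResidueDegrees S f) (hp : p.Prime) : 0 < f p := by
  have hne : span {(p : S)} ≠ ⊤ := by
    rw [Ne, ← absNorm_eq_one_iff, absNorm_span_natCast]
    exact (Nat.one_lt_pow Module.finrank_pos.ne' hp.one_lt).ne'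
  obtain ⟨P, hPmax, hpP⟩ := exists_le_maximal _ hne
  have hnorm := hf p hp P hPmax (hpP (mem_span_singleton_self _))
  refine Nat.pos_of_ne_zero fun h0 => hPmax.ne_top ?_
  rwa [h0, pow_zero, absNorm_eq_one_iff] at hnorm

theorem card_primesAbove_mul_le (hf : HasResidueDegrees S f) (hp : p.Prime) :
    #(primesAbove S p) * f p ≤ Module.finrank ℤ S := by
  have hdvd : ∏ P ∈ primesAbove S p, P ∣ span {(p : S)} := by
    calc ∏ P ∈ primesAbove S p, P = (primesAbove S p).val.prod := (prod_val _).symm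
      _ ∣ (normalizedFactors (span {(p : S)})).prod :=
        Multiset.prod_dvd_prod_of_le (Multiset.dedup_le _)
      _ = span {(p : S)} := Ideal.prod_normalizedFactors_eq_self (span_natCast_ne_bot hp.ne_zero)
  have := map_dvd absNorm hdvd
  rw [map_prod, prod_congr rfl fun P hP => absNorm_of_mem_primesAbove hf hp hP, prod_const,
    ← pow_mul, absNorm_span_natCast, mul_comm] at this
  exact (Nat.pow_dvd_pow_iff_le_right hp.one_lt).1 this

theorem card_primesAbove_le (hf : HasResidueDegrees S f) (hp : p.Prime) :
    #(primesAbove S p) ≤ Module.finrank ℤ S :=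
  (Nat.le_mul_of_pos_right _ (residueDegree_pos hf hp)).trans (card_primesAbove_mul_le hf hp)

theorem factorization_absNorm_of_prime (hf : HasResidueDegrees S f) (hP : Prime P)
    (hℓ : ℓ.Prime) :
    (absNorm P).factorization ℓ = if P ∈ primesAbove S ℓ then f ℓ else 0 := by
  have := (isPrime_of_prime hP).isMaximal hP.ne_zero
  obtain ⟨p, -, -, hpP, hp, -⟩ := exists_prime_and_absNorm_eq_pow P
  have hPp : P ∈ primesAbove S p := (mem_primesAbove hp.ne_zero).2 ⟨isPrime_of_prime hP, hpP⟩
  rw [absNorm_of_mem_primesAbove hf hp hPp, hp.factorization_pow, Finsupp.single_apply]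
  by_cases h : p = ℓ
  · subst h; simp [hPp]
  · rw [if_neg h, if_neg fun hPℓ => h (eq_of_mem_primesAbove hp hℓ hPp hPℓ)]

theorem factorization_absNorm_multiset_prod (hf : HasResidueDegrees S f)
    {t : Multiset (Ideal S)} (ht : ∀ P ∈ t, Prime P) (hℓ : ℓ.Prime) :
    (absNorm t.prod).factorization ℓ = f ℓ * ∑ P ∈ primesAbove S ℓ, t.count P := by
  induction t using Multiset.induction_on with
  | empty => simp
  | cons P t ih =>
    have hP := ht P (Multiset.mem_cons_self _ _)
    have ht' : ∀ Q ∈ t, Prime Q := fun Q hQ => ht Q (Multiset.mem_cons_of_mem hQ)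
    rw [Multiset.prod_cons, map_mul, Nat.factorization_mul (absNorm_eq_zero_iff.not.2 hP.ne_zero)
      (absNorm_multiset_prod_ne_zero ht'), Finsupp.add_apply, ih ht',
      factorization_absNorm_of_prime hf hP hℓ]
    simp only [Multiset.count_cons, sum_add_distrib, sum_ite_eq']
    split_ifs <;> ring

theorem dvd_absNorm_multiset_prod_iff (hf : HasResidueDegrees S f) (hn : n ≠ 0)
    {t : Multiset (Ideal S)} (ht : ∀ P ∈ t, Prime P) :
    n ∣ absNorm t.prod ↔
      ∀ ℓ : ℕ, ℓ.Prime → n.factorization ℓ ⌈/⌉ f ℓ ≤ ∑ P ∈ primesAbove S ℓ, t.count P := by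
  rw [← Nat.factorization_prime_le_iff_dvd hn (absNorm_multiset_prod_ne_zero ht)]
  refine forall₂_congr fun ℓ hℓ => ?_
  rw [factorization_absNorm_multiset_prod hf ht hℓ,
    ceilDiv_le_iff_le_mul (residueDegree_pos hf hℓ)]

theorem nStar_dvd_absNorm (hf : HasResidueDegrees S f) (hn : n ≠ 0) {𝔞 : Ideal S}
    (h : n ∣ absNorm 𝔞) : nStar f n ∣ absNorm 𝔞 := by
  rcases eq_or_ne 𝔞 ⊥ with rfl | h𝔞
  · simp
  have ht : ∀ P ∈ normalizedFactors 𝔞, Prime P := fun P hP => prime_of_normalized_factor P hP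
  rw [← Ideal.prod_normalizedFactors_eq_self h𝔞] at h ⊢
  rw [dvd_absNorm_multiset_prod_iff hf hn ht] at h
  rw [← Nat.factorization_prime_le_iff_dvd (nStar_ne_zero f n)
    (absNorm_multiset_prod_ne_zero ht)]
  intro ℓ hℓ
  rw [factorization_nStar, factorization_absNorm_multiset_prod hf ht hℓ]
  exact Nat.mul_le_mul_left _ (h ℓ hℓ)

theorem count_cappedPrimes (hp : p.Prime) (hP : P ∈ primesAbove S p) :
    (cappedPrimes S f n).count P = n.factorization p ⌈/⌉ f p := by
  rw [cappedPrimes, Multiset.count_sum', sum_eq_single p]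
  · rw [Multiset.count_nsmul, Multiset.count_eq_one_of_mem (primesAbove S p).nodup hP, mul_one]
  · intro q hq hqp
    rw [Multiset.count_nsmul, Multiset.count_eq_zero_of_notMem, mul_zero]
    exact fun hPq => hqp (eq_of_mem_primesAbove (Nat.prime_of_mem_primeFactors hq) hp hPq hP)
  · intro hpn
    rw [Finsupp.notMem_support_iff.1 (by rwa [Nat.support_factorization]), zero_ceilDiv,
      zero_smul, Multiset.count_zero]

theorem card_toFinset_cappedPrimes_le (hf : HasResidueDegrees S f) :
    #(cappedPrimes S f n).toFinset ≤ Module.finrank ℤ S * #n.primeFactors :=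
  calc #(cappedPrimes S f n).toFinset
      ≤ #(n.primeFactors.biUnion (primesAbove S)) := card_le_card fun P hP => by
        obtain ⟨p, hp, hPp⟩ := exists_of_mem_cappedPrimes (Multiset.mem_toFinset.1 hP)
        exact mem_biUnion.2 ⟨p, hp, hPp⟩
    _ ≤ ∑ p ∈ n.primeFactors, #(primesAbove S p) := card_biUnion_le
    _ ≤ ∑ p ∈ n.primeFactors, Module.finrank ℤ S :=
        sum_le_sum fun p hp => card_primesAbove_le hf (Nat.prime_of_mem_primeFactors hp)
    _ = Module.finrank ℤ S * #n.primeFactors := by rw [sum_const, smul_eq_mul, mul_comm]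

theorem absNorm_prod_cappedPrimes_dvd (hf : HasResidueDegrees S f) (hn : n ≠ 0) :
    absNorm (cappedPrimes S f n).prod ∣ n ^ Module.finrank ℤ S := by
  have hnorm : absNorm (cappedPrimes S f n).prod =
      ∏ p ∈ n.primeFactors, p ^ (#(primesAbove S p) * f p * (n.factorization p ⌈/⌉ f p)) := by
    rw [cappedPrimes, Multiset.prod_sum, map_prod]
    refine prod_congr rfl fun p hp => ?_
    rw [Multiset.prod_nsmul, map_pow, map_multiset_prod, prod_map_val, prod_congr rfl fun P hP =>
      absNorm_of_mem_primesAbove hf (Nat.prime_of_mem_primeFactors hp) hP, prod_const,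
      ← pow_mul, ← pow_mul]
    ring
  conv_rhs => rw [← Nat.prod_factorization_pow_eq_self hn, Finsupp.prod,
    Nat.support_factorization, ← prod_pow]
  rw [hnorm]
  refine prod_dvd_prod_of_dvd _ _ fun p hp => ?_
  rw [← pow_mul]
  refine pow_dvd_pow p ?_
  have hp := Nat.prime_of_mem_primeFactors hp
  have hf0 := residueDegree_pos hf hp
  calc #(primesAbove S p) * f p * (n.factorization p ⌈/⌉ f p)
      ≤ Module.finrank ℤ S * n.factorization p :=
        Nat.mul_le_mul (card_primesAbove_mul_le hf hp)
          ((ceilDiv_le_iff_le_mul hf0).2 (Nat.le_mul_of_pos_left _ hf0))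
    _ = n.factorization p * Module.finrank ℤ S := mul_comm _ _

theorem dvd_absNorm_prod_cappedPrimes_inter_iff (hf : HasResidueDegrees S f) (hn : n ≠ 0)
    {t : Multiset (Ideal S)} (ht : ∀ P ∈ t, Prime P) :
    n ∣ absNorm (cappedPrimes S f n ∩ t).prod ↔ n ∣ absNorm t.prod := by
  rw [dvd_absNorm_multiset_prod_iff hf hn ht, dvd_absNorm_multiset_prod_iff hf hn
    fun P hP => ht P (Multiset.mem_of_le Multiset.inter_le_right hP)]
  refine forall₂_congr fun ℓ hℓ => ?_
  rw [sum_congr rfl fun P hP => by rw [Multiset.count_inter, count_cappedPrimes hℓ hP]]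
  exact le_sum_min_iff

end ResidueDegrees

theorem exists_moebius_inversion_function_general
    (K : Type) [Field K] [NumberField K] (k : ℕ)
    (hdeg : Module.finrank ℚ K = k)
    (fd : ℕ → ℕ)
    -- fd p is the residue degree of the primes above p:
    (hfd : ∀ p : ℕ, p.Prime → ∀ P : Ideal (𝓞 K), P.IsMaximal → (p : 𝓞 K) ∈ P →
      Ideal.absNorm P = p ^ fd p)
    (n : ℕ) (hn : 0 < n) :
    ∃ μ : Ideal (𝓞 K) → ℤ,
      (∀ 𝔮 : Ideal (𝓞 K), 𝔮 ≠ 0 →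
        ((if n ∣ Ideal.absNorm 𝔮 then (1 : ℝ) else 0)
          = ∑' 𝔫 : Ideal (𝓞 K), (μ 𝔫 : ℝ) * (if 𝔫 ∣ 𝔮 then 1 else 0))) ∧
      (∀ 𝔫 : Ideal (𝓞 K), μ 𝔫 ≠ 0 →
        nStar fd n ∣ Ideal.absNorm 𝔫 ∧ Ideal.absNorm 𝔫 ∣ n ^ k) ∧
      (∀ 𝔮 : Ideal (𝓞 K), |μ 𝔮| ≤ 2 ^ (k * n.primeFactors.card)) := by
  have hk : Module.finrank ℤ (𝓞 K) = k := (RingOfIntegers.rank K).trans hdeg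
  have hM : ∀ P ∈ cappedPrimes (𝓞 K) fd n, Prime P := fun _ => prime_of_mem_cappedPrimes
  set F : Multiset (Ideal (𝓞 K)) → ℤ := fun t => if n ∣ absNorm t.prod then 1 else 0
  refine ⟨divisorMoebius F (cappedPrimes (𝓞 K) fd n), fun 𝔮 h𝔮 => ?_, fun 𝔫 h𝔫 => ?_,
    fun 𝔮 => ?_⟩
  · have ht : ∀ P ∈ normalizedFactors 𝔮, Prime P := fun P hP => prime_of_normalized_factor P hP
    rw [tsum_divisorMoebius_mul_ite_dvd hM h𝔮]
    simp [F, dvd_absNorm_prod_cappedPrimes_inter_iff hfd hn.ne' ht,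
      Ideal.prod_normalizedFactors_eq_self h𝔮]
  · obtain ⟨t, htM, rfl, ht⟩ := exists_prod_eq_of_divisorMoebius_ne_zero h𝔫
    obtain ⟨u, hut, hu⟩ := exists_le_of_multisetMoebius_ne_zero ht
    have hdvd : n ∣ absNorm t.prod :=
      (ite_ne_right_iff.1 hu).1.trans (map_dvd absNorm (Multiset.prod_dvd_prod_of_le hut))
    refine ⟨nStar_dvd_absNorm hfd hn.ne' hdvd, hk ▸ ?_⟩
    exact (map_dvd absNorm (Multiset.prod_dvd_prod_of_le htM)).trans
      (absNorm_prod_cappedPrimes_dvd hfd hn.ne')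
  · have hF : ∀ u, |F u| ≤ 1 := fun u => by simp only [F]; split_ifs <;> simp
    exact (abs_divisorMoebius_le hF 𝔮).trans
      (pow_le_pow_right₀ one_le_two (hk ▸ card_toFinset_cappedPrimes_le hfd))

/-- existence of the inclusion-exclusion function μ_n on ideals
with 1_{n ∣ N𝔮} = Σ_𝔫 μ_n(𝔫) 1_{𝔫 ∣ 𝔮}, supported on n* ∣ N𝔫 ∣ n^k, and
bounded by 2^{k ω(n)}. -/
theorem exists_moebius_inversion_function
    (K : Type) [Field K] [NumberField K] [IsGalois ℚ K] (k : ℕ)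
    (hdeg : Module.finrank ℚ K = k)
    (fd : ℕ → ℕ)
    -- fd p is the residue degree of the primes above p:
    (hfd : ∀ p : ℕ, p.Prime → ∀ P : Ideal (𝓞 K), P.IsMaximal → (p : 𝓞 K) ∈ P →
      Ideal.absNorm P = p ^ fd p)
    (n : ℕ) (hn : 0 < n) :
    ∃ μ : Ideal (𝓞 K) → ℤ,
      (∀ 𝔮 : Ideal (𝓞 K), 𝔮 ≠ 0 →
        ((if n ∣ Ideal.absNorm 𝔮 then (1 : ℝ) else 0)
          = ∑' 𝔫 : Ideal (𝓞 K), (μ 𝔫 : ℝ) * (if 𝔫 ∣ 𝔮 then 1 else 0))) ∧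
      (∀ 𝔫 : Ideal (𝓞 K), μ 𝔫 ≠ 0 →
        nStar fd n ∣ Ideal.absNorm 𝔫 ∧ Ideal.absNorm 𝔫 ∣ n ^ k) ∧
      (∀ 𝔮 : Ideal (𝓞 K), |μ 𝔮| ≤ 2 ^ (k * n.primeFactors.card)) :=
  exists_moebius_inversion_function_general K k hdeg fd hfd n hn

end
end

section
/- Let K be a Galois number field of degree k ≥ 3 with incomplete norm form f, and suppose μ_n is a function on integral ideals of O_K satisfying 1_{n | N𝔮} = Σ_𝔫 μ_n(𝔫)·1_{𝔫 | 𝔮} for all nonzero integral ideals 𝔮. Then for every positive integer n, ϱ(n)/n = Σ_𝔫 μ_n(𝔫)·ρ(𝔫)/N𝔫. -/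
/-!
Put `M = n · ∏ N𝔫`, the product over the nonzero ideals `𝔫` in the support of `μ`. Whether
`n ∣ f(x)` depends only on `x mod n`, and whether `𝔫 ∣ (x₁ω₁ + ⋯ + x_{k-1}ω_{k-1})` only on
`x mod N𝔫`, so `ϱ(n)/n` and every `ρ(𝔫)/N𝔫` are proportions of residues `x mod M`. Applying the
hypothesis on `μ` to the principal ideal `𝔮 = (x₁ω₁ + ⋯)` and averaging over `x mod M` gives the
identity; when `x₁ω₁ + ⋯ = 0` one applies it to `(M)` instead, which is congruent to `0`
modulo `n` and modulo every `𝔫` in the support.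
-/

open NumberField Classical

noncomputable section

/-- The incomplete norm form f(x) = N(x₁ω₁ + … + x_{k-1}ω_{k-1}). -/
def incNormForm (K : Type) [Field K] [NumberField K] (k : ℕ)
    (ω : Module.Basis (Fin k) ℤ (𝓞 K)) (x : Fin (k-1) → ℤ) : ℤ :=
  Algebra.norm ℤ (∑ i : Fin (k-1), x i • ω (Fin.castLE (Nat.sub_le k 1) i))

/-- ϱ(n) = n^{-(k-2)} #{x mod n : n ∣ f(x)}. -/
def varrho (K : Type) [Field K] [NumberField K] (k : ℕ)
    (ω : Module.Basis (Fin k) ℤ (𝓞 K)) (n : ℕ) : ℝ :=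
  (Nat.card {x : Fin (k-1) → ZMod n //
      (n : ℤ) ∣ incNormForm K k ω (fun i => ((x i).val : ℤ))} : ℝ) / (n : ℝ) ^ (k - 2)

/-- ρ(𝔫) = (N𝔫)^{-(k-2)} #{x mod N𝔫 : 𝔫 ∣ (x)}. -/
def rhoIdeal (K : Type) [Field K] [NumberField K] (k : ℕ)
    (ω : Module.Basis (Fin k) ℤ (𝓞 K)) (𝔫 : Ideal (𝓞 K)) : ℝ :=
  (Nat.card {x : Fin (k-1) → ZMod (Ideal.absNorm 𝔫) //
      (∑ i : Fin (k-1), ((x i).val : ℤ) • ω (Fin.castLE (Nat.sub_le k 1) i)) ∈ 𝔫} : ℝ)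
    / (Ideal.absNorm 𝔫 : ℝ) ^ (k - 2)

open Finset

theorem AddMonoidHom.card_filter_comp_mul_card {G H : Type*} [AddGroup G] [Fintype G]
    [AddGroup H] [Fintype H] (f : G →+ H) (hf : Function.Surjective f) (Q : H → Prop) :
    #{x | Q (f x)} * Fintype.card H = #{y | Q y} * Fintype.card G := by
  set c := #{g | f g = 0}
  have hfiber : ∀ y, #{g | f g = y} = c := fun y => card_fiber_eq_of_mem_range f (hf y) (hf 0)
  have hcount : ∀ Q : H → Prop, #{x | Q (f x)} = #{y | Q y} * c := fun Q => by
    rw [card_eq_sum_card_fiberwise (f := f) (t := {y | Q y}) (fun x hx => by simpa using hx),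
      sum_congr rfl fun y hy => ?_, sum_const, smul_eq_mul]
    rw [← hfiber y, filter_filter]
    congr 1 with x
    simp only [mem_filter, mem_univ, true_and] at hy ⊢
    exact ⟨And.right, fun h => ⟨h ▸ hy, h⟩⟩
  have hG : Fintype.card G = Fintype.card H * c := by
    simpa using hcount fun _ => True
  rw [hcount, hG]
  ring

theorem Algebra.map_norm_add_smul {R S T : Type*} [CommRing R] [CommRing S] [Algebra R S]
    [Module.Free R S] [Module.Finite R S] [CommRing T] (φ : R →+* T) {r : R} (hr : φ r = 0)
    (a c : S) : φ (Algebra.norm R (a + r • c)) = φ (Algebra.norm R a) := by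
  let b := Module.Free.chooseBasis R S
  simp only [Algebra.norm_eq_matrix_det b, RingHom.map_det, map_add, map_smul]
  congr 1
  ext i j
  simp [hr]

theorem Algebra.dvd_norm_add_zsmul_iff {S : Type*} [CommRing S] [Module.Free ℤ S]
    [Module.Finite ℤ S] {n m : ℕ} (hnm : n ∣ m) (a c : S) :
    (n : ℤ) ∣ Algebra.norm ℤ (a + (m : ℤ) • c) ↔ (n : ℤ) ∣ Algebra.norm ℤ a := by
  simp only [← ZMod.intCast_zmod_eq_zero_iff_dvd, ← eq_intCast (Int.castRingHom (ZMod n))]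
  rw [Algebra.map_norm_add_smul _ (by simpa [ZMod.natCast_eq_zero_iff] using hnm)]

theorem exists_sum_zsmul_eq_add_zsmul {ι S : Type*} [Fintype ι] [AddCommGroup S] (v : ι → S)
    {d : ℕ} {z z' : ι → ℤ} (h : ∀ i, (z i : ZMod d) = z' i) :
    ∃ c, ∑ i, z i • v i = ∑ i, z' i • v i + (d : ℤ) • c := by
  choose q hq using fun i => (ZMod.intCast_eq_intCast_iff_dvd_sub _ _ d).1 (h i).symm
  refine ⟨∑ i, q i • v i, ?_⟩
  simp only [smul_sum, ← mul_smul, ← hq, sub_smul, sum_sub_distrib]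
  abel

theorem tsum_intCast_mul_eq_sum_filter_ne_zero {α : Type*} [Zero α] (μ : α → ℤ)
    (hμ : (Function.support μ).Finite) (g : α → ℝ) (hg : g 0 = 0) :
    ∑' a, (μ a : ℝ) * g a = ∑ a ∈ hμ.toFinset.filter (· ≠ 0), (μ a : ℝ) * g a := by
  refine tsum_eq_sum fun a ha => ?_
  simp only [mem_filter, Set.Finite.mem_toFinset, Function.mem_support, not_and_or,
    not_not] at ha
  rcases ha with ha | rfl
  · simp [ha]
  · simp [hg]

theorem Ideal.sum_zsmul_mem_iff_of_intCast_eq {ι S : Type*} [Fintype ι] [CommRing S]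
    (I : Ideal S) {d : ℕ} (hd : (d : S) ∈ I) (v : ι → S) {z z' : ι → ℤ}
    (h : ∀ i, (z i : ZMod d) = z' i) :
    ∑ i, z i • v i ∈ I ↔ ∑ i, z' i • v i ∈ I := by
  obtain ⟨c, hc⟩ := exists_sum_zsmul_eq_add_zsmul v h
  rw [hc, zsmul_eq_mul, Int.cast_natCast]
  exact I.add_mem_iff_left (I.mul_mem_right c hd)

def residueDensity {ι : Type*} [Fintype ι] (P : (ι → ℤ) → Prop) (d : ℕ) : ℝ :=
  Nat.card {x : ι → ZMod d // P fun i => (x i).val} / (d : ℝ) ^ Fintype.card ι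

section residueDensity

variable {ι : Type*} [Fintype ι]

theorem residueDensity_eq_of_dvd {P : (ι → ℤ) → Prop} {d M : ℕ} [NeZero M] (hd : d ∣ M)
    (hP : ∀ z z' : ι → ℤ, (∀ i, (z i : ZMod d) = z' i) → (P z ↔ P z')) :
    residueDensity P d = residueDensity P M := by
  have : NeZero d := ⟨fun h => NeZero.ne M (Nat.eq_zero_of_zero_dvd (h ▸ hd))⟩
  let π := (ZMod.castHom hd (ZMod d)).toAddMonoidHom.compLeft ι
  have hπ : Function.Surjective π := (ZMod.castHom_surjective hd).comp_left
  have hcard := π.card_filter_comp_mul_card hπ fun y => P fun i => (y i).val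
  have hperiodic : ∀ x : ι → ZMod M, P (fun i => (π x i).val) ↔ P fun i => (x i).val :=
    fun x => hP _ _ fun i => by simp [π, ZMod.natCast_val, ZMod.cast_id]
  simp only [hperiodic, Fintype.card_fun, ZMod.card] at hcard
  simp only [residueDensity, Nat.card_eq_fintype_card, Fintype.card_subtype]
  rw [div_eq_div_iff (pow_ne_zero _ (Nat.cast_ne_zero.2 (NeZero.ne d)))
    (pow_ne_zero _ (Nat.cast_ne_zero.2 (NeZero.ne M)))]
  exact_mod_cast hcard.symm

theorem residueDensity_eq_sum {κ : Type*} {P : (ι → ℤ) → Prop} {Q : κ → (ι → ℤ) → Prop}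
    [DecidablePred P] [∀ j, DecidablePred (Q j)] (s : Finset κ) (w : κ → ℝ)
    (h : ∀ z, (if P z then 1 else 0 : ℝ) = ∑ j ∈ s, w j * if Q j z then 1 else 0)
    (d : ℕ) [NeZero d] :
    residueDensity P d = ∑ j ∈ s, w j * residueDensity (Q j) d := by
  simp only [residueDensity, Nat.card_eq_fintype_card, Fintype.card_subtype, ← sum_boole, h]
  rw [sum_comm, sum_div]
  simp only [← mul_sum, mul_div_assoc]

end residueDensity

section NumberField

variable (K : Type) [Field K] [NumberField K] {k : ℕ} (ω : Module.Basis (Fin k) ℤ (𝓞 K))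

theorem ite_dvd_norm_eq_sum_ite_mem {n m : ℕ} (S : Finset (Ideal (𝓞 K)))
    (μ : Ideal (𝓞 K) → ℝ)
    (hμ : ∀ 𝔮 : Ideal (𝓞 K), 𝔮 ≠ 0 → ((if n ∣ Ideal.absNorm 𝔮 then (1 : ℝ) else 0)
      = ∑ 𝔫 ∈ S, μ 𝔫 * if 𝔫 ∣ 𝔮 then 1 else 0))
    (hm : m ≠ 0) (hnm : n ∣ m) (hSm : ∀ 𝔫 ∈ S, Ideal.absNorm 𝔫 ∣ m) (a : 𝓞 K) :
    (if (n : ℤ) ∣ Algebra.norm ℤ a then (1 : ℝ) else 0)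
      = ∑ 𝔫 ∈ S, μ 𝔫 * if a ∈ 𝔫 then 1 else 0 := by
  have of_ne_zero : ∀ a : 𝓞 K, a ≠ 0 → (if (n : ℤ) ∣ Algebra.norm ℤ a then (1 : ℝ) else 0)
      = ∑ 𝔫 ∈ S, μ 𝔫 * if a ∈ 𝔫 then 1 else 0 := fun a ha => by
    simpa only [Ideal.absNorm_span_singleton, Ideal.dvd_span_singleton, Int.natCast_dvd]
      using hμ (Ideal.span {a}) (by simpa using ha)
  rcases eq_or_ne a 0 with rfl | ha
  · -- `0` and `m` are congruent modulo `n` and modulo every `𝔫 ∈ S`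
    have hmem : ∀ 𝔫 ∈ S, (m : 𝓞 K) ∈ 𝔫 := fun 𝔫 h𝔫 => by
      obtain ⟨t, rfl⟩ := hSm 𝔫 h𝔫
      simpa using 𝔫.mul_mem_right (t : 𝓞 K) 𝔫.absNorm_mem
    have hdvd := Algebra.dvd_norm_add_zsmul_iff hnm (0 : 𝓞 K) 1
    simp only [zero_add, zsmul_one, Int.cast_natCast] at hdvd
    simp only [← hdvd, of_ne_zero _ (Nat.cast_ne_zero.2 hm)]
    exact sum_congr rfl fun 𝔫 h𝔫 => by simp [hmem 𝔫 h𝔫]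
  · exact of_ne_zero a ha

theorem incNormForm_dvd_iff_of_intCast_eq (n : ℕ) {z z' : Fin (k - 1) → ℤ}
    (h : ∀ i, (z i : ZMod n) = z' i) :
    (n : ℤ) ∣ incNormForm K k ω z ↔ (n : ℤ) ∣ incNormForm K k ω z' := by
  obtain ⟨c, hc⟩ := exists_sum_zsmul_eq_add_zsmul (fun i => ω (Fin.castLE (Nat.sub_le k 1) i)) h
  rw [incNormForm, incNormForm, hc, Algebra.dvd_norm_add_zsmul_iff dvd_rfl]

theorem varrho_div_eq_residueDensity (hk : 2 ≤ k) (n : ℕ) :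
    varrho K k ω n / n = residueDensity (fun z => (n : ℤ) ∣ incNormForm K k ω z) n := by
  rw [varrho, residueDensity, div_div, ← pow_succ, Fintype.card_fin,
    show k - 2 + 1 = k - 1 by omega]

theorem rhoIdeal_div_eq_residueDensity (hk : 2 ≤ k) (𝔫 : Ideal (𝓞 K)) :
    rhoIdeal K k ω 𝔫 / Ideal.absNorm 𝔫
      = residueDensity (fun z => ∑ i, z i • ω (Fin.castLE (Nat.sub_le k 1) i) ∈ 𝔫)
          (Ideal.absNorm 𝔫) := by
  rw [rhoIdeal, residueDensity, div_div, ← pow_succ, Fintype.card_fin,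
    show k - 2 + 1 = k - 1 by omega]

end NumberField

/-- ϱ(n)/n = Σ_𝔫 μ_n(𝔫) ρ(𝔫)/N𝔫. -/
theorem varrho_eq_sum_moebius_rho
    (K : Type) [Field K] [NumberField K] (k : ℕ) (hk : 3 ≤ k)
    (ω : Module.Basis (Fin k) ℤ (𝓞 K))
    (n : ℕ) (hn : 0 < n)
    (μ : Ideal (𝓞 K) → ℤ) (hμfin : (Function.support μ).Finite)
    (hμ : ∀ 𝔮 : Ideal (𝓞 K), 𝔮 ≠ 0 →
      ((if n ∣ Ideal.absNorm 𝔮 then (1 : ℝ) else 0)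
        = ∑' 𝔫 : Ideal (𝓞 K), (μ 𝔫 : ℝ) * (if 𝔫 ∣ 𝔮 then 1 else 0))) :
    varrho K k ω n / n
      = ∑' 𝔫 : Ideal (𝓞 K), (μ 𝔫 : ℝ) * rhoIdeal K k ω 𝔫 / (Ideal.absNorm 𝔫 : ℝ) := by
  set S := hμfin.toFinset.filter (· ≠ 0)
  set M := n * ∏ 𝔫 ∈ S, Ideal.absNorm 𝔫
  have hnM : n ∣ M := dvd_mul_right n _
  have hSM : ∀ 𝔫 ∈ S, Ideal.absNorm 𝔫 ∣ M := fun 𝔫 h𝔫 =>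
    dvd_mul_of_dvd_right (dvd_prod_of_mem _ h𝔫) n
  have hM : M ≠ 0 := mul_ne_zero hn.ne' <| prod_ne_zero_iff.2 fun 𝔫 h𝔫 => by
    simpa [S, Ideal.absNorm_eq_zero_iff] using (mem_filter.1 h𝔫).2
  have : NeZero M := ⟨hM⟩
  have hpoint (z : Fin (k - 1) → ℤ) : (if (n : ℤ) ∣ incNormForm K k ω z then (1 : ℝ) else 0)
      = ∑ 𝔫 ∈ S, (μ 𝔫 : ℝ) * if ∑ i, z i • ω (Fin.castLE (Nat.sub_le k 1) i) ∈ 𝔫 then 1 else 0 :=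
    ite_dvd_norm_eq_sum_ite_mem K S _ (fun 𝔮 h𝔮 => (hμ 𝔮 h𝔮).trans
      (tsum_intCast_mul_eq_sum_filter_ne_zero μ hμfin _ (by rw [if_neg (by rwa [zero_dvd_iff])])))
      hM hnM hSM _
  simp_rw [mul_div_assoc]
  rw [tsum_intCast_mul_eq_sum_filter_ne_zero μ hμfin _ (by simp),
    varrho_div_eq_residueDensity K ω (by omega),
    residueDensity_eq_of_dvd hnM fun _ _ => incNormForm_dvd_iff_of_intCast_eq K ω n,
    residueDensity_eq_sum S _ hpoint]
  refine sum_congr rfl fun 𝔫 h𝔫 => ?_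
  rw [rhoIdeal_div_eq_residueDensity K ω (by omega), residueDensity_eq_of_dvd (hSM 𝔫 h𝔫)
    fun _ _ => Ideal.sum_zsmul_mem_iff_of_intCast_eq 𝔫 𝔫.absNorm_mem _]
end
end

section
/- Let K be a Galois number field of degree k ≥ 3 with incomplete norm form f. There is a constant C = C(K) such that for every rational prime p that splits completely in O_K (i.e., p lies below degree-one prime ideals), |ϱ(p) − k| ≤ C · p^{−1 + 1/k}. -/
open NumberField

noncomputable section

open Finset Module

/-!
Let `𝔭` be a prime of degree one above `p` and `ψ : 𝓞 K → 𝓞 K / 𝔭 ≅ 𝔽_p`. Since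
`N(y) = ∏_σ σ y`, reducing `f(x)` along `ψ` factors it into the `k` linear forms
`x ↦ ∑ xᵢ ψ(σ ωᵢ)`, so `p ∣ f(x)` exactly on a union of `k` hyperplanes of `𝔽_p^{k-1}`.
Because `ω₁ = 1` normalises the forms, these hyperplanes are distinct unless `𝔭` contains all
`σ ωᵢ - τ ωᵢ` for some `σ ≠ τ`; an automorphism is determined by its values on `k - 1 > k / 2`
independent elements, so this happens only for the finitely many `p` dividing the norms of the
(nonzero) ideals these differences generate. For the other `p`, inclusion–exclusion to second
order counts `k p^{k-2} + O(k² p^{k-3})` points, i.e. `ϱ(p) = k + O(1/p)`, and the exceptional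
primes are absorbed into the constant.
-/

theorem Finset.sum_card_le_card_biUnion_add_sum_card_inter {ι α : Type*} [DecidableEq ι]
    [DecidableEq α] (s : Finset ι) (t : ι → Finset α) :
    ∑ i ∈ s, #(t i) ≤ #(s.biUnion t) + ∑ ij ∈ s.offDiag, #(t ij.1 ∩ t ij.2) := by
  set U := s.biUnion t
  set m : α → ℕ := fun a => #{i ∈ s | a ∈ t i}
  have hsub : ∀ i ∈ s, t i ⊆ U := fun i hi => subset_biUnion_of_mem t hi
  have hsingle : ∑ i ∈ s, #(t i) = ∑ a ∈ U, m a := calc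
    ∑ i ∈ s, #(t i) = ∑ i ∈ s, #(U.bipartiteAbove (fun i a => a ∈ t i) i) :=
      sum_congr rfl fun i hi => by
        rw [bipartiteAbove, filter_mem_eq_inter, inter_eq_right.mpr (hsub i hi)]
    _ = ∑ a ∈ U, m a := sum_card_bipartiteAbove_eq_sum_card_bipartiteBelow _
  have hpair : ∑ ij ∈ s.offDiag, #(t ij.1 ∩ t ij.2) = ∑ a ∈ U, (m a * m a - m a) := calc
    ∑ ij ∈ s.offDiag, #(t ij.1 ∩ t ij.2)
        = ∑ ij ∈ s.offDiag, #(U.bipartiteAbove (fun ij a => a ∈ t ij.1 ∩ t ij.2) ij) :=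
      sum_congr rfl fun ij hij => by
        rw [bipartiteAbove, filter_mem_eq_inter, inter_eq_right.mpr
          (inter_subset_left.trans (hsub _ (mem_offDiag.mp hij).1))]
    _ = ∑ a ∈ U, #(s.offDiag.bipartiteBelow (fun ij a => a ∈ t ij.1 ∩ t ij.2) a) :=
      sum_card_bipartiteAbove_eq_sum_card_bipartiteBelow _
    _ = ∑ a ∈ U, (m a * m a - m a) := sum_congr rfl fun a _ => by
        rw [← offDiag_card]
        congr 1
        ext ij
        simp only [bipartiteBelow, mem_filter, mem_offDiag, mem_inter]
        tauto
  have hpos : ∀ a ∈ U, 1 ≤ m a := fun a ha => by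
    obtain ⟨i, hi, ha⟩ := mem_biUnion.mp ha
    exact card_pos.mpr ⟨i, mem_filter.mpr ⟨hi, ha⟩⟩
  -- a point lying in `m ≥ 1` of the sets contributes `m` on the left, `1 + (m² - m)` on the right
  rw [hsingle, hpair, card_eq_sum_ones U, ← sum_add_distrib]
  refine sum_le_sum fun a ha => ?_
  have := hpos a ha
  have : m a + m a ≤ m a * m a + 1 := by nlinarith
  omega

section FiniteField

variable {F V : Type*} [Field F] [Finite F] [AddCommGroup V] [Module F V] [Finite V]

theorem Submodule.natCard_mul_natCard_le_of_lt {W W' : Submodule F V} (h : W < W') :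
    Nat.card F * Nat.card W ≤ Nat.card W' := by
  rw [natCard_eq_pow_finrank (K := F) (V := W), natCard_eq_pow_finrank (K := F) (V := W'),
    ← pow_succ']
  exact Nat.pow_le_pow_right Nat.card_pos (Submodule.finrank_lt_finrank_of_lt h)

theorem Submodule.natCard_mul_natCard_inf_le_of_ne {W W' : Submodule F V} (hne : W ≠ W')
    (h : finrank F W = finrank F W') : Nat.card F * Nat.card ↥(W ⊓ W') ≤ Nat.card W := by
  refine natCard_mul_natCard_le_of_lt (inf_le_left.lt_of_ne fun hW => hne ?_)
  exact eq_of_le_of_finrank_eq (inf_eq_left.mp hW) h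

theorem Submodule.abs_natCard_iUnion_div_sub_le {G : Type*} [Fintype G] {d : ℕ}
    (H : G → Submodule F V) (hH : Function.Injective H) (hd : ∀ σ, finrank F (H σ) = d) :
    |(Nat.card (⋃ σ, (H σ : Set V)) : ℝ) / (Nat.card F : ℝ) ^ d - Fintype.card G|
      ≤ (Fintype.card G : ℝ) ^ 2 / Nat.card F := by
  classical
  have := Fintype.ofFinite V
  set q := Nat.card F
  set g := Fintype.card G
  set t : G → Finset V := fun σ => (H σ : Set V).toFinset
  have hcard : ∀ σ, #(t σ) = q ^ d := fun σ => by
    rw [← Nat.card_eq_card_toFinset, ← hd σ]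
    exact natCard_eq_pow_finrank
  have hinter : ∀ σ τ, σ ≠ τ → q * #(t σ ∩ t τ) ≤ q ^ d := fun σ τ hστ => by
    rw [← hcard σ, ← Set.toFinset_inter, ← Nat.card_eq_card_toFinset, ← Nat.card_eq_card_toFinset]
    exact natCard_mul_natCard_inf_le_of_ne (hH.ne hστ) (by rw [hd, hd])
  set N := #(univ.biUnion t)
  set X := ∑ ij ∈ univ.offDiag, #(t ij.1 ∩ t ij.2)
  have hN : Nat.card (⋃ σ, (H σ : Set V)) = N := by
    rw [Nat.card_eq_card_toFinset, Set.toFinset_iUnion]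
  have hupper : N ≤ g * q ^ d := by
    simpa [hcard] using card_biUnion_le (s := univ) (t := t)
  have hlower : g * q ^ d ≤ N + X := by
    simpa [hcard] using sum_card_le_card_biUnion_add_sum_card_inter univ t
  have hpairs : X * q ≤ g ^ 2 * q ^ d := calc
    X * q ≤ ∑ ij ∈ (univ : Finset G).offDiag, q ^ d := by
      rw [sum_mul]
      exact sum_le_sum fun ij hij => (mul_comm _ _).trans_le (hinter _ _ (mem_offDiag.mp hij).2.2)
    _ ≤ g ^ 2 * q ^ d := by
      rw [sum_const, smul_eq_mul, offDiag_card, card_univ]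
      exact Nat.mul_le_mul_right _ (by rw [sq]; exact Nat.sub_le _ _)
  have hq : (0 : ℝ) < q := by exact_mod_cast Nat.card_pos
  have hqd : (0 : ℝ) < (q : ℝ) ^ d := by positivity
  have hle : (N : ℝ) / q ^ d ≤ g := by
    rw [div_le_iff₀ hqd]; exact_mod_cast hupper
  have hge : (g : ℝ) ≤ N / q ^ d + X / q ^ d := by
    rw [← add_div, le_div_iff₀ hqd]; exact_mod_cast hlower
  have hX : (X : ℝ) / q ^ d ≤ g ^ 2 / q := by
    rw [div_le_div_iff₀ hqd hq]; exact_mod_cast hpairs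
  have hg : (0 : ℝ) ≤ g ^ 2 / q := by positivity
  rw [hN, abs_le]
  constructor <;> linarith

end FiniteField

section LinearCombination

variable {F ι : Type*} [Field F] [Fintype ι] [DecidableEq ι]

theorem Fintype.linearCombination_ne_zero {c : ι → F} (hc : c ≠ 0) :
    Fintype.linearCombination F c ≠ 0 := by
  contrapose! hc
  ext i
  simpa using LinearMap.congr_fun hc (Pi.single i 1)

theorem Fintype.finrank_ker_linearCombination_add_one {c : ι → F} (hc : c ≠ 0) :
    finrank F (LinearMap.ker (Fintype.linearCombination F c)) + 1 = Fintype.card ι := by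
  rw [Module.Dual.finrank_ker_add_one_of_ne_zero (Fintype.linearCombination_ne_zero hc),
    Module.finrank_fintype_fun_eq_card]

theorem Fintype.eq_of_ker_linearCombination_eq {c c' : ι → F} {i : ι} (h : c i = c' i)
    (hi : c i ≠ 0) (hker : LinearMap.ker (Fintype.linearCombination F c) =
      LinearMap.ker (Fintype.linearCombination F c')) :
    c = c' := by
  have := Module.Dual.eq_of_ker_eq_of_apply_eq (Pi.single i 1) hker (by simpa using h)
    (by simpa using hi)
  ext j
  simpa using LinearMap.congr_fun this (Pi.single j 1)

end LinearCombination

/-- The `v i` lie in the fixed field of `τ⁻¹ * σ`, which is a proper subfield if `σ ≠ τ` and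
therefore has degree at most `finrank F L / 2`. -/
theorem AlgEquiv.eq_of_apply_eq_of_linearIndependent {F L ι : Type*} [Field F] [Field L]
    [Algebra F L] [FiniteDimensional F L] [Fintype ι] {v : ι → L} (hv : LinearIndependent F v)
    (hcard : finrank F L < 2 * Fintype.card ι) {σ τ : L ≃ₐ[F] L}
    (h : ∀ i, σ (v i) = τ (v i)) : σ = τ := by
  by_contra hne
  set α := τ⁻¹ * σ
  set E := IntermediateField.fixedField (Subgroup.zpowers α)
  have hfix : ∀ i, v i ∈ E := fun i ⟨f, hf⟩ => by
    have hα : α ∈ MulAction.stabilizer (L ≃ₐ[F] L) (v i) := by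
      show τ.symm (σ (v i)) = v i
      rw [h, symm_apply_apply]
    exact (Subgroup.zpowers_le.mpr hα) hf
  have hE : Fintype.card ι ≤ finrank F E := by
    have hv' : LinearIndependent F fun i => (⟨v i, hfix i⟩ : E) :=
      LinearIndependent.of_comp E.val.toLinearMap hv
    simpa using hv'.fintype_card_le_finrank
  have hα : 2 ≤ finrank E L := by
    rw [IntermediateField.finrank_fixedField_eq_card, Nat.card_zpowers]
    have hα1 : orderOf α ≠ 1 := fun h1 => hne (inv_mul_eq_one.mp (orderOf_eq_one_iff.mp h1)).symm
    have := orderOf_pos α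
    omega
  have := finrank_mul_finrank F E L
  nlinarith

theorem NumberField.exists_isMaximal_natCast_mem (K : Type*) [Field K] [NumberField K] {p : ℕ}
    (hp : p.Prime) : ∃ P : Ideal (𝓞 K), P.IsMaximal ∧ (p : 𝓞 K) ∈ P := by
  have := Fact.mk hp
  obtain ⟨P, hP, _⟩ :=
    Ideal.exists_maximal_ideal_liesOver_of_isIntegral (S := 𝓞 K) (Ideal.span {(p : ℤ)})
  refine ⟨P, hP, ?_⟩
  simpa using
    (Ideal.mem_of_liesOver P (Ideal.span {(p : ℤ)}) p).mp (Ideal.mem_span_singleton_self _)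

theorem Ideal.exists_ringHom_zmod_ker_eq {R : Type*} [CommRing R] {I : Ideal R} {p : ℕ}
    (hp : p.Prime) (hI : Nat.card (R ⧸ I) = p) : ∃ ψ : R →+* ZMod p, RingHom.ker ψ = I := by
  have : Finite (R ⧸ I) := Nat.finite_of_card_ne_zero (hI ▸ hp.ne_zero)
  have := Fintype.ofFinite (R ⧸ I)
  let e := ZMod.ringEquivOfPrime (R ⧸ I) hp (Nat.card_eq_fintype_card (α := R ⧸ I) ▸ hI)
  refine ⟨(e.symm : R ⧸ I →+* ZMod p).comp (Ideal.Quotient.mk I), ?_⟩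
  rw [← RingHom.comap_ker, RingHom.ker_coe_equiv, ← RingHom.ker_eq_comap_bot, Ideal.mk_ker]

theorem NumberField.exists_ringHom_zmod_absNorm_ker_eq (K : Type*) [Field K] [NumberField K]
    {p : ℕ} (hp : p.Prime)
    (hsplit : ∀ P : Ideal (𝓞 K), P.IsMaximal → (p : 𝓞 K) ∈ P → Ideal.absNorm P = p) :
    ∃ ψ : 𝓞 K →+* ZMod p, Ideal.absNorm (RingHom.ker ψ) = p := by
  obtain ⟨P, hPmax, hpP⟩ := exists_isMaximal_natCast_mem K hp
  have hP := hsplit P hPmax hpP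
  obtain ⟨ψ, rfl⟩ := Ideal.exists_ringHom_zmod_ker_eq hp
    (by rwa [Ideal.absNorm_apply, Submodule.cardQuot_apply] at hP)
  exact ⟨ψ, hP⟩

theorem NumberField.algebraMap_norm_eq_prod_galRestrict {K : Type*} [Field K] [NumberField K]
    [IsGalois ℚ K] (y : 𝓞 K) :
    algebraMap ℤ (𝓞 K) (Algebra.norm ℤ y) = ∏ σ : K ≃ₐ[ℚ] K, galRestrict ℤ ℚ K (𝓞 K) σ y := by
  rw [prod_galRestrict_eq_norm]
  congr 1
  apply (algebraMap ℤ ℚ).injective_int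
  rw [IsIntegralClosure.algebraMap_mk', eq_intCast, Algebra.coe_norm_int]

section ConjugateCoefficients

variable {K : Type} [Field K] [NumberField K] [IsGalois ℚ K] {k : ℕ}

/-- The coefficients, reduced along `ψ`, of the linear factor `∑ i, x i * σ (ω i)` of the
incomplete norm form. -/
def conjCoeffs (ω : Module.Basis (Fin k) ℤ (𝓞 K)) {R : Type*} [CommRing R] (ψ : 𝓞 K →+* R)
    (σ : K ≃ₐ[ℚ] K) (i : Fin (k - 1)) : R :=
  ψ (galRestrict ℤ ℚ K (𝓞 K) σ (ω (Fin.castLE (Nat.sub_le k 1) i)))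

theorem intCast_incNormForm (ω : Module.Basis (Fin k) ℤ (𝓞 K)) {R : Type*} [CommRing R]
    (ψ : 𝓞 K →+* R) (x : Fin (k - 1) → ℤ) :
    (incNormForm K k ω x : R) = ∏ σ : K ≃ₐ[ℚ] K, ∑ i, (x i : R) * conjCoeffs ω ψ σ i := by
  rw [incNormForm, ← eq_intCast (ψ.comp (algebraMap ℤ (𝓞 K))), RingHom.comp_apply,
    algebraMap_norm_eq_prod_galRestrict, map_prod]
  simp only [map_sum, zsmul_eq_mul, map_mul, map_intCast, conjCoeffs]

theorem conjCoeffs_zero {ω : Module.Basis (Fin k) ℤ (𝓞 K)} (hk : 2 ≤ k)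
    (hω1 : ω ⟨0, by omega⟩ = 1) {R : Type*} [CommRing R] (ψ : 𝓞 K →+* R) (σ : K ≃ₐ[ℚ] K) :
    conjCoeffs ω ψ σ ⟨0, by omega⟩ = 1 := by
  rw [conjCoeffs, Fin.castLE_mk, hω1, map_one, map_one]

theorem galRestrict_eq_of_apply_basis_eq (hk : 3 ≤ k) (hdeg : finrank ℚ K = k)
    (ω : Module.Basis (Fin k) ℤ (𝓞 K)) {σ τ : K ≃ₐ[ℚ] K}
    (h : ∀ i : Fin (k - 1), galRestrict ℤ ℚ K (𝓞 K) σ (ω (Fin.castLE (Nat.sub_le k 1) i)) =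
      galRestrict ℤ ℚ K (𝓞 K) τ (ω (Fin.castLE (Nat.sub_le k 1) i))) :
    σ = τ := by
  let b := ω.localizationLocalization ℚ (nonZeroDivisors ℤ) K
  have hv : LinearIndependent ℚ fun i : Fin (k - 1) => b (Fin.castLE (Nat.sub_le k 1) i) :=
    b.linearIndependent.comp _ (Fin.castLE_injective _)
  refine AlgEquiv.eq_of_apply_eq_of_linearIndependent hv
    (by rw [Fintype.card_fin, hdeg]; omega) fun i => ?_
  simp only [b, Module.Basis.localizationLocalization_apply,
    ← algebraMap_galRestrict_apply ℤ, h]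

theorem exists_conjCoeffs_injective (hk : 3 ≤ k) (hdeg : finrank ℚ K = k)
    (ω : Module.Basis (Fin k) ℤ (𝓞 K)) :
    ∃ D : ℕ, D ≠ 0 ∧ ∀ {R : Type} [CommRing R] (ψ : 𝓞 K →+* R),
      ¬ Ideal.absNorm (RingHom.ker ψ) ∣ D → Function.Injective (conjCoeffs ω ψ) := by
  let I : (K ≃ₐ[ℚ] K) × (K ≃ₐ[ℚ] K) → Ideal (𝓞 K) := fun στ => Ideal.span (Set.range fun i =>
    galRestrict ℤ ℚ K (𝓞 K) στ.1 (ω (Fin.castLE (Nat.sub_le k 1) i)) -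
      galRestrict ℤ ℚ K (𝓞 K) στ.2 (ω (Fin.castLE (Nat.sub_le k 1) i)))
  refine ⟨∏ στ ∈ Finset.univ.offDiag, Ideal.absNorm (I στ), ?_, fun ψ hψ σ τ hστ => ?_⟩
  · refine Finset.prod_ne_zero_iff.mpr fun στ hστ => ?_
    rw [Ne, Ideal.absNorm_eq_zero_iff, Ideal.span_eq_bot]
    rintro h
    refine (Finset.mem_offDiag.mp hστ).2.2 (galRestrict_eq_of_apply_basis_eq hk hdeg ω fun i => ?_)
    exact sub_eq_zero.mp (h _ ⟨i, rfl⟩)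
  · by_contra hne
    have hmem : (σ, τ) ∈ (Finset.univ : Finset (K ≃ₐ[ℚ] K)).offDiag :=
      Finset.mem_offDiag.mpr ⟨Finset.mem_univ σ, Finset.mem_univ τ, hne⟩
    refine hψ ((Ideal.absNorm_dvd_absNorm_of_le ?_).trans (Finset.dvd_prod_of_mem _ hmem))
    rw [Ideal.span_le, Set.range_subset_iff]
    intro i
    simpa [sub_eq_zero, conjCoeffs] using congrFun hστ i

theorem abs_varrho_sub_le (hk : 2 ≤ k) (hdeg : finrank ℚ K = k)
    (ω : Module.Basis (Fin k) ℤ (𝓞 K)) (hω1 : ω ⟨0, by omega⟩ = 1) {p : ℕ} [Fact p.Prime]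
    (ψ : 𝓞 K →+* ZMod p) (hψ : Function.Injective (conjCoeffs ω ψ)) :
    |varrho K k ω p - k| ≤ (k : ℝ) ^ 2 / p := by
  let H σ := LinearMap.ker (Fintype.linearCombination (ZMod p) (conjCoeffs ω ψ σ))
  have hc0 := conjCoeffs_zero hk hω1 ψ
  have hdvd : ∀ x : Fin (k - 1) → ZMod p,
      (p : ℤ) ∣ incNormForm K k ω (fun i => ((x i).val : ℤ)) ↔ ∃ σ, x ∈ H σ := fun x => by
    rw [← ZMod.intCast_zmod_eq_zero_iff_dvd, intCast_incNormForm ω ψ, Finset.prod_eq_zero_iff]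
    simp [H, Fintype.linearCombination_apply]
  have hH : Function.Injective H := fun σ τ h =>
    hψ (Fintype.eq_of_ker_linearCombination_eq ((hc0 σ).trans (hc0 τ).symm) (by simp [hc0]) h)
  have hd : ∀ σ, finrank (ZMod p) (H σ) = k - 2 := fun σ => by
    show finrank _ (LinearMap.ker _) = _
    have := Fintype.finrank_ker_linearCombination_add_one (F := ZMod p)
      (c := conjCoeffs ω ψ σ) (Function.ne_iff.mpr ⟨⟨0, by omega⟩, by simp [hc0]⟩)
    simp only [Fintype.card_fin] at this
    omega
  have := Submodule.abs_natCard_iUnion_div_sub_le H hH hd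
  rwa [Nat.card_zmod, Fintype.card_eq_nat_card, IsGalois.card_aut_eq_finrank, hdeg,
    ← Nat.card_congr (Equiv.subtypeEquivRight fun x => (hdvd x).trans Set.mem_iUnion.symm)]
    at this

end ConjugateCoefficients

theorem exists_forall_le_mul_of_forall_notMem {P : ℕ → Prop} {f g : ℕ → ℝ} (S : Finset ℕ)
    (hg : ∀ n, 0 ≤ g n) (hgS : ∀ n ∈ S, 0 < g n) (C₀ : ℝ)
    (h : ∀ n, P n → n ∉ S → f n ≤ C₀ * g n) : ∃ C, ∀ n, P n → f n ≤ C * g n := by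
  refine ⟨max C₀ (∑ n ∈ S, |f n| / g n), fun n hn => ?_⟩
  by_cases hnS : n ∈ S
  · calc f n ≤ |f n| / g n * g n := by rw [div_mul_cancel₀ _ (hgS n hnS).ne']; exact le_abs_self _
      _ ≤ max C₀ (∑ n ∈ S, |f n| / g n) * g n := by
        refine mul_le_mul_of_nonneg_right
          ((Finset.single_le_sum (f := fun m => |f m| / g m) (fun m hm => ?_) hnS).trans
          (le_max_right _ _)) (hg n)
        exact div_nonneg (abs_nonneg _) (hgS m hm).le
  · exact (h n hn hnS).trans (mul_le_mul_of_nonneg_right (le_max_left _ _) (hg n))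

/-- ϱ(p) = k + O(p^{-1+1/k}) for p splitting completely. -/
theorem varrho_split_prime
    (K : Type) [Field K] [NumberField K] [IsGalois ℚ K] (k : ℕ) (hk : 3 ≤ k)
    (hdeg : Module.finrank ℚ K = k)
    (ω : Module.Basis (Fin k) ℤ (𝓞 K)) (hω1 : ω ⟨0, by omega⟩ = 1) :
    ∃ C : ℝ, ∀ p : ℕ, p.Prime →
      -- p splits completely, i.e. the prime ideals above p have degree one:
      (∀ P : Ideal (𝓞 K), P.IsMaximal → (p : 𝓞 K) ∈ P → Ideal.absNorm P = p) →
      |varrho K k ω p - k| ≤ C * (p : ℝ) ^ (-1 + 1 / (k : ℝ)) := by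
  obtain ⟨D, hD, hinj⟩ := exists_conjCoeffs_injective hk hdeg ω
  refine (exists_forall_le_mul_of_forall_notMem
    (P := fun p => p.Prime ∧ ∀ P : Ideal (𝓞 K), P.IsMaximal → (p : 𝓞 K) ∈ P → Ideal.absNorm P = p)
    (f := fun p => |varrho K k ω p - k|) (g := fun p => (p : ℝ) ^ (-1 + 1 / (k : ℝ)))
    D.primeFactors (fun p => by positivity)
    (fun p hp => by have := (Nat.prime_of_mem_primeFactors hp).pos; positivity) ((k : ℝ) ^ 2)
    ?_).imp fun C hC p hp hsplit => hC p ⟨hp, hsplit⟩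
  rintro p ⟨hp, hsplit⟩ hpD
  have := Fact.mk hp
  obtain ⟨ψ, hψ⟩ := NumberField.exists_ringHom_zmod_absNorm_ker_eq K hp hsplit
  have hinjψ := hinj ψ (by simpa [hψ, hp, hD] using hpD)
  calc |varrho K k ω p - k| ≤ (k : ℝ) ^ 2 / p := abs_varrho_sub_le (by omega) hdeg ω hω1 ψ hinjψ
    _ = (k : ℝ) ^ 2 * (p : ℝ) ^ (-1 : ℝ) := by rw [Real.rpow_neg_one, div_eq_mul_inv]
    _ ≤ (k : ℝ) ^ 2 * (p : ℝ) ^ (-1 + 1 / (k : ℝ)) := by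
      gcongr
      · exact_mod_cast hp.one_lt.le
      · simp only [le_add_iff_nonneg_right]; positivity

end
end
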